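/- arXiv:1409.4487 — 2 statements merged into one kernel-verified Lean document; each statement's English description precedes it below -/
import Mathlib

section
/- Resonance identity for KP-I: if ξ₁, ξ₂ are nonzero with ξ₁ + ξ₂ ≠ 0, and ω(ξ,η) = ξ³ + η²/ξ, then the system ω(ξ₁,η₁) + ω(ξ₂,η₂) = ω(ξ₁+ξ₂, η₁+η₂) holds if and only if η₁/ξ₁ − η₂/ξ₂ = ±√3 (ξ₁ + ξ₂). -/
/-! The resonance function factors as
`ω(ξ₁+ξ₂, η₁+η₂) - ω(ξ₁,η₁) - ω(ξ₂,η₂) = ξ₁ξ₂/(ξ₁+ξ₂) · (3(ξ₁+ξ₂)² - (η₁/ξ₁ - η₂/ξ₂)²)`,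
so it vanishes exactly when the second factor does. -/

def kpDispersion {K : Type*} [Field K] (ξ η : K) : K := ξ ^ 3 + η ^ 2 / ξ

theorem kpDispersion_add_sub_sub {K : Type*} [Field K] {ξ₁ ξ₂ : K} (η₁ η₂ : K)
    (h₁ : ξ₁ ≠ 0) (h₂ : ξ₂ ≠ 0) (h₁₂ : ξ₁ + ξ₂ ≠ 0) :
    kpDispersion (ξ₁ + ξ₂) (η₁ + η₂) - kpDispersion ξ₁ η₁ - kpDispersion ξ₂ η₂ =
      ξ₁ * ξ₂ / (ξ₁ + ξ₂) * (3 * (ξ₁ + ξ₂) ^ 2 - (η₁ / ξ₁ - η₂ / ξ₂) ^ 2) := by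
  unfold kpDispersion
  field_simp
  ring

theorem eq_sqrt_three_mul_or_eq_neg_iff {a b : ℝ} :
    a = √3 * b ∨ a = -(√3 * b) ↔ 3 * b ^ 2 - a ^ 2 = 0 := by
  rw [← sq_eq_sq_iff_eq_or_eq_neg, mul_pow, Real.sq_sqrt (by norm_num : (0 : ℝ) ≤ 3),
    sub_eq_zero, eq_comm]

/-- resonance identity for KP-I. With the dispersion relation
`ω(ξ,η) = ξ³ + η²/ξ`, for `ξ₁, ξ₂ ≠ 0` with `ξ₁ + ξ₂ ≠ 0`, the resonance
equation `ω(ξ₁,η₁) + ω(ξ₂,η₂) = ω(ξ₁+ξ₂, η₁+η₂)` holds if and only if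
`η₁/ξ₁ − η₂/ξ₂ = ±√3 (ξ₁ + ξ₂)`. -/
theorem kp1_resonance_identity (ξ₁ ξ₂ η₁ η₂ : ℝ)
    (h1 : ξ₁ ≠ 0) (h2 : ξ₂ ≠ 0) (h3 : ξ₁ + ξ₂ ≠ 0) :
    (ξ₁ ^ 3 + η₁ ^ 2 / ξ₁) + (ξ₂ ^ 3 + η₂ ^ 2 / ξ₂)
        = (ξ₁ + ξ₂) ^ 3 + (η₁ + η₂) ^ 2 / (ξ₁ + ξ₂) ↔
      η₁ / ξ₁ - η₂ / ξ₂ = Real.sqrt 3 * (ξ₁ + ξ₂) ∨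
      η₁ / ξ₁ - η₂ / ξ₂ = -(Real.sqrt 3 * (ξ₁ + ξ₂)) := by
  change kpDispersion ξ₁ η₁ + kpDispersion ξ₂ η₂ = kpDispersion (ξ₁ + ξ₂) (η₁ + η₂) ↔ _
  rw [eq_sqrt_three_mul_or_eq_neg_iff, eq_comm, ← sub_eq_zero, ← sub_sub,
    kpDispersion_add_sub_sub η₁ η₂ h1 h2 h3, mul_eq_zero,
    or_iff_right (div_ne_zero (mul_ne_zero h1 h2) h3)]
end

section
/- Anisotropic Gagliardo–Nirenberg inequality: for f : ℝ² → ℝ (Schwartz), ‖f‖_{L^∞} ≲ ‖f‖_{L²}^{1/4} ‖∂_x f‖_{L²}^{1/2} ‖∂_y² f‖_{L²}^{1/4}, with an absolute implicit constant. -/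
/-
Along the vertical line through `(x, y)`, the one-dimensional Agmon inequality gives
`f(x,y)² ≤ 2 ‖f(x,·)‖₂ ‖∂_y f(x,·)‖₂`. Each squared line norm `∫ g(x,t)² dt` is the integral over
`s ≤ x` of its `s`-derivative `∫ 2 g ∂ₓg dt`, hence at most `2 ∫ |g ∂ₓg|` over the plane. For
`g = f` this bounds `‖f(x,·)‖₂²` by `2 ‖f‖₂ ‖∂ₓf‖₂`; for `g = ∂_y f` an integration by parts in
`t` first turns `∂_y f ∂ₓ∂_y f` into `-∂_y²f ∂ₓf`, which bounds `‖∂_y f(x,·)‖₂²` by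
`2 ‖∂ₓf‖₂ ‖∂_y²f‖₂`. Together, `f(x,y)⁴ ≤ 16 ‖f‖₂ ‖∂ₓf‖₂² ‖∂_y²f‖₂`.
-/

open MeasureTheory Filter Set Topology
open scoped SchwartzMap LineDeriv

local notation "∂₁" => LineDeriv.lineDerivOp ((1 : ℝ), (0 : ℝ))
local notation "∂₂" => LineDeriv.lineDerivOp ((0 : ℝ), (1 : ℝ))

theorem integral_abs_mul_le_sqrt_mul_sqrt {α : Type*} [MeasurableSpace α] {μ : Measure α}
    {u v : α → ℝ} (hu : MemLp u 2 μ) (hv : MemLp v 2 μ) :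
    ∫ a, |u a * v a| ∂μ ≤ √(∫ a, u a ^ 2 ∂μ) * √(∫ a, v a ^ 2 ∂μ) := by
  rw [← ENNReal.ofReal_ofNat] at hu hv
  have h := integral_mul_norm_le_Lp_mul_Lq Real.HolderConjugate.two_two hu hv
  simp only [Real.norm_eq_abs, Real.rpow_two, sq_abs, ← abs_mul] at h
  simpa only [Real.sqrt_eq_rpow] using h

theorem abs_setIntegral_integral_le {α β : Type*} [MeasurableSpace α] [MeasurableSpace β]
    {μ : Measure α} {ν : Measure β} [SFinite μ] [SFinite ν] {F : α × β → ℝ}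
    (hF : Integrable F (μ.prod ν)) (s : Set α) :
    |∫ a in s, ∫ b, F (a, b) ∂ν ∂μ| ≤ ∫ z, |F z| ∂μ.prod ν := by
  have hint : Integrable (fun a => ∫ b, |F (a, b)| ∂ν) μ := hF.abs.integral_prod_left
  calc |∫ a in s, ∫ b, F (a, b) ∂ν ∂μ|
      ≤ ∫ a in s, |∫ b, F (a, b) ∂ν| ∂μ := abs_integral_le_integral_abs
    _ ≤ ∫ a in s, ∫ b, |F (a, b)| ∂ν ∂μ :=
        integral_mono_of_nonneg (.of_forall fun _ => abs_nonneg _) hint.integrableOn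
          (.of_forall fun _ => abs_integral_le_integral_abs)
    _ ≤ ∫ a, ∫ b, |F (a, b)| ∂ν ∂μ :=
        setIntegral_le_integral hint (.of_forall fun _ => integral_nonneg fun _ => abs_nonneg _)
    _ = ∫ z, |F z| ∂μ.prod ν := (integral_prod _ hF.abs).symm

theorem abs_le_of_sq_le_two_mul_sqrt_mul_sqrt {c A B N X Y : ℝ} (hN : 0 ≤ N) (hX : 0 ≤ X)
    (hY : 0 ≤ Y) (hc : c ^ 2 ≤ 2 * √A * √B) (hA : A ≤ 2 * (√N * √X))
    (hB : B ≤ 2 * (√X * √Y)) :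
    |c| ≤ 2 * N ^ (1 / 8 : ℝ) * X ^ (1 / 4 : ℝ) * Y ^ (1 / 8 : ℝ) := by
  have eighth_root : ∀ {M : ℝ}, 0 ≤ M → ∃ m, 0 ≤ m ∧ M = m ^ 8 := fun {M} hM =>
    ⟨M ^ (8⁻¹ : ℝ), by positivity, (Real.rpow_inv_natCast_pow hM (by norm_num)).symm⟩
  obtain ⟨n, hn, rfl⟩ := eighth_root hN
  obtain ⟨x, hx, rfl⟩ := eighth_root hX
  obtain ⟨y, hy, rfl⟩ := eighth_root hY
  have hsqrt : ∀ {m : ℝ}, 0 ≤ m → √(m ^ 8) = m ^ 4 := fun hm => by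
    rw [show (8 : ℕ) = 4 * 2 from rfl, pow_mul, Real.sqrt_sq (by positivity)]
  have hsqrt_le : ∀ {D a : ℝ}, 0 ≤ a → D ≤ 2 * a ^ 2 → √D ≤ √2 * a := fun ha hD => by
    rw [Real.sqrt_le_left (by positivity), mul_pow, Real.sq_sqrt zero_le_two]
    exact hD
  rw [hsqrt hn, hsqrt hx] at hA
  rw [hsqrt hx, hsqrt hy] at hB
  have hA' : √A ≤ √2 * (n ^ 2 * x ^ 2) := hsqrt_le (by positivity) (by linarith)
  have hB' : √B ≤ √2 * (x ^ 2 * y ^ 2) := hsqrt_le (by positivity) (by linarith)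
  have hc' : c ^ 2 ≤ (2 * n * x ^ 2 * y) ^ 2 := calc
    c ^ 2 ≤ 2 * (√2 * (n ^ 2 * x ^ 2)) * (√2 * (x ^ 2 * y ^ 2)) := by
      refine hc.trans ?_
      rw [mul_assoc, mul_assoc 2]
      gcongr
    _ = (2 * n * x ^ 2 * y) ^ 2 := by
      rw [show ∀ a b : ℝ, 2 * (√2 * a) * (√2 * b) = 2 * (√2 * √2) * a * b by intros; ring,
        Real.mul_self_sqrt zero_le_two]
      ring
  have hroot : ∀ {m : ℝ}, 0 ≤ m → (m ^ 8) ^ (1 / 8 : ℝ) = m := fun hm => by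
    rw [show (1 / 8 : ℝ) = ((8 : ℕ) : ℝ)⁻¹ by norm_num]
    exact Real.pow_rpow_inv_natCast hm (by norm_num)
  rw [show (1 / 4 : ℝ) = 1 / 8 * (2 : ℕ) by norm_num, Real.rpow_mul_natCast (by positivity),
    hroot hn, hroot hx, hroot hy]
  exact abs_le_of_sq_le_sq hc' (by positivity)

theorem Function.hasTemperateGrowth_prodMk_left (t : ℝ) :
    (fun s : ℝ => (s, t)).HasTemperateGrowth := by
  convert (Function.HasTemperateGrowth.const ((0 : ℝ), t)).add
    (ContinuousLinearMap.inl ℝ ℝ ℝ).hasTemperateGrowth using 2 with s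
  simp

theorem Function.hasTemperateGrowth_prodMk_right (x : ℝ) :
    (fun t : ℝ => (x, t)).HasTemperateGrowth := by
  convert (Function.HasTemperateGrowth.const (x, (0 : ℝ))).add
    (ContinuousLinearMap.inr ℝ ℝ ℝ).hasTemperateGrowth using 2 with t
  simp

namespace SchwartzMap

section Slices

variable {F : Type*} [NormedAddCommGroup F] [NormedSpace ℝ F]

noncomputable def horizontalSlice (g : 𝓢(ℝ × ℝ, F)) (t : ℝ) : 𝓢(ℝ, F) :=
  compCLM ℝ (Function.hasTemperateGrowth_prodMk_left t)
    ⟨1, 1, fun s => by simpa using (norm_fst_le (s, t)).trans (le_add_of_nonneg_left zero_le_one)⟩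
    g

noncomputable def verticalSlice (g : 𝓢(ℝ × ℝ, F)) (x : ℝ) : 𝓢(ℝ, F) :=
  compCLM ℝ (Function.hasTemperateGrowth_prodMk_right x)
    ⟨1, 1, fun t => by simpa using (norm_snd_le (x, t)).trans (le_add_of_nonneg_left zero_le_one)⟩
    g

@[simp] theorem coe_horizontalSlice (g : 𝓢(ℝ × ℝ, F)) (t : ℝ) :
    ⇑(horizontalSlice g t) = fun s => g (s, t) := rfl

@[simp] theorem coe_verticalSlice (g : 𝓢(ℝ × ℝ, F)) (x : ℝ) :
    ⇑(verticalSlice g x) = fun t => g (x, t) := rfl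

theorem deriv_apply_prodMk_left (g : 𝓢(ℝ × ℝ, F)) (s t : ℝ) :
    deriv (fun s => g (s, t)) s = ∂₁ g (s, t) :=
  ((g.hasFDerivAt (s, t)).comp_hasDerivAt s
    ((hasDerivAt_id s).prodMk (hasDerivAt_const s t))).deriv

theorem deriv_apply_prodMk_right (g : 𝓢(ℝ × ℝ, F)) (x t : ℝ) :
    deriv (fun t => g (x, t)) t = ∂₂ g (x, t) :=
  ((g.hasFDerivAt (x, t)).comp_hasDerivAt t
    ((hasDerivAt_const t x).prodMk (hasDerivAt_id t))).deriv

end Slices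

theorem integrable_mul {D : Type*} [NormedAddCommGroup D] [NormedSpace ℝ D]
    [FiniteDimensional ℝ D] [MeasurableSpace D] [BorelSpace D] {μ : Measure D}
    [μ.HasTemperateGrowth] (g h : 𝓢(D, ℝ)) :
    Integrable (fun z => g z * h z) μ :=
  (pairing (ContinuousLinearMap.mul ℝ ℝ) g h).integrable

theorem lineDerivOp_comm {E F : Type*} [NormedAddCommGroup E] [NormedSpace ℝ E]
    [NormedAddCommGroup F] [NormedSpace ℝ F] (f : 𝓢(E, F)) (v w : E) :
    ∂_{v} (∂_{w} f) = ∂_{w} (∂_{v} f) := by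
  ext x
  have hsymm : IsSymmSndFDerivAt ℝ f x := (f.smooth 2).contDiffAt.isSymmSndFDerivAt (by simp)
  have hsecond : ∀ v w : E, ∂_{v} (∂_{w} f) x = fderiv ℝ (fderiv ℝ f) x v w := fun v w => by
    have hw : ⇑(∂_{w} f : 𝓢(E, F)) = fun y => fderiv ℝ f y w :=
      funext (lineDerivOp_apply_eq_fderiv w f)
    rw [lineDerivOp_apply_eq_fderiv, hw, fderiv_clm_apply _ (differentiableAt_const w)]
    · simp
    · exact ((f.smooth 2).fderiv_right one_add_one_eq_two.le).differentiable one_ne_zero x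
  rw [hsecond, hsecond, hsymm]

theorem sq_eq_integral_Iic_two_mul_deriv (u : 𝓢(ℝ, ℝ)) (x : ℝ) :
    u x ^ 2 = ∫ s in Iic x, 2 * u s * deriv u s := by
  have hint : Integrable (fun s => 2 * u s * deriv u s) := by
    simpa only [mul_assoc, derivCLM_apply] using (integrable_mul u (derivCLM ℝ ℝ u)).const_mul 2
  have hlim : Tendsto (fun s => u s ^ 2) atBot (𝓝 0) := by
    simpa using (u.tendsto_cocompact.mono_left atBot_le_cocompact).pow 2
  have hderiv : ∀ s, HasDerivAt (fun s => u s ^ 2) (2 * u s * deriv u s) s := fun s => by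
    simpa using (u.hasDerivAt s).fun_pow 2
  rw [integral_Iic_of_hasDerivAt_of_tendsto' (fun s _ => hderiv s) hint.integrableOn hlim,
    sub_zero]

theorem sq_le_two_mul_integral_abs_mul_deriv (u : 𝓢(ℝ, ℝ)) (x : ℝ) :
    u x ^ 2 ≤ 2 * ∫ s, |u s * deriv u s| := by
  have hint : Integrable (fun s => 2 * |u s * deriv u s|) :=
    (integrable_mul u (derivCLM ℝ ℝ u)).abs.const_mul 2
  calc u x ^ 2 ≤ |∫ s in Iic x, 2 * u s * deriv u s| :=
        (sq_eq_integral_Iic_two_mul_deriv u x).trans_le (le_abs_self _)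
    _ ≤ ∫ s in Iic x, 2 * |u s * deriv u s| := by
        simpa only [mul_assoc, abs_mul, abs_two] using
          abs_integral_le_integral_abs (f := fun s => 2 * u s * deriv u s)
    _ ≤ ∫ s, 2 * |u s * deriv u s| :=
        setIntegral_le_integral hint (.of_forall fun _ => by positivity)
    _ = 2 * ∫ s, |u s * deriv u s| := integral_const_mul _ _

theorem integral_sq_vertical_eq (g : 𝓢(ℝ × ℝ, ℝ)) (x : ℝ) :
    ∫ t, g (x, t) ^ 2 = ∫ s in Iic x, ∫ t, 2 * g (s, t) * ∂₁ g (s, t) := by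
  have hint : Integrable (fun z : ℝ × ℝ => 2 * g z * ∂₁ g z) := by
    simpa only [mul_assoc] using (integrable_mul g (∂₁ g)).const_mul 2
  calc ∫ t, g (x, t) ^ 2 = ∫ t, ∫ s in Iic x, 2 * g (s, t) * ∂₁ g (s, t) := by
        refine integral_congr_ae (.of_forall fun t => ?_)
        simpa only [coe_horizontalSlice, deriv_apply_prodMk_left] using
          sq_eq_integral_Iic_two_mul_deriv (horizontalSlice g t) x
    _ = ∫ s in Iic x, ∫ t, 2 * g (s, t) * ∂₁ g (s, t) :=
        (integral_integral_swap
          (hint.mono_measure (Measure.prod_mono Measure.restrict_le_self le_rfl))).symm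

theorem integral_sq_vertical_le (g : 𝓢(ℝ × ℝ, ℝ)) (x : ℝ) :
    ∫ t, g (x, t) ^ 2 ≤ 2 * ∫ z, |g z * ∂₁ g z| := by
  have hint : Integrable (fun z : ℝ × ℝ => 2 * g z * ∂₁ g z) := by
    simpa only [mul_assoc] using (integrable_mul g (∂₁ g)).const_mul 2
  calc ∫ t, g (x, t) ^ 2 ≤ |∫ s in Iic x, ∫ t, 2 * g (s, t) * ∂₁ g (s, t)| :=
        (integral_sq_vertical_eq g x).trans_le (le_abs_self _)
    _ ≤ ∫ z, |2 * g z * ∂₁ g z| := abs_setIntegral_integral_le hint _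
    _ = 2 * ∫ z, |g z * ∂₁ g z| := by simp only [mul_assoc, abs_mul, abs_two, integral_const_mul]

theorem integral_mul_mixed_deriv_vertical (f : 𝓢(ℝ × ℝ, ℝ)) (s : ℝ) :
    ∫ t, ∂₂ f (s, t) * ∂₁ (∂₂ f) (s, t) = -∫ t, ∂₂ (∂₂ f) (s, t) * ∂₁ f (s, t) := by
  have h := integral_mul_deriv_eq_neg_deriv_mul (verticalSlice (∂₂ f) s) (verticalSlice (∂₁ f) s)
  simp only [coe_verticalSlice, deriv_apply_prodMk_right] at h
  rwa [lineDerivOp_comm f ((1 : ℝ), (0 : ℝ))]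

theorem integral_sq_deriv_vertical_le (f : 𝓢(ℝ × ℝ, ℝ)) (x : ℝ) :
    ∫ t, ∂₂ f (x, t) ^ 2 ≤ 2 * ∫ z, |∂₁ f z * ∂₂ (∂₂ f) z| := by
  have hint : Integrable (fun z : ℝ × ℝ => 2 * ∂₂ (∂₂ f) z * ∂₁ f z) := by
    simpa only [mul_assoc] using (integrable_mul (∂₂ (∂₂ f)) (∂₁ f)).const_mul 2
  calc ∫ t, ∂₂ f (x, t) ^ 2 = -∫ s in Iic x, ∫ t, 2 * ∂₂ (∂₂ f) (s, t) * ∂₁ f (s, t) := by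
        rw [integral_sq_vertical_eq, ← integral_neg]
        refine setIntegral_congr_fun measurableSet_Iic fun s _ => ?_
        simp only [mul_assoc, integral_const_mul, integral_mul_mixed_deriv_vertical]
        ring
    _ ≤ |∫ s in Iic x, ∫ t, 2 * ∂₂ (∂₂ f) (s, t) * ∂₁ f (s, t)| := neg_le_abs _
    _ ≤ ∫ z, |2 * ∂₂ (∂₂ f) z * ∂₁ f z| := abs_setIntegral_integral_le hint _
    _ = 2 * ∫ z, |∂₁ f z * ∂₂ (∂₂ f) z| := by
        simp only [mul_assoc, abs_mul, abs_two, integral_const_mul, mul_comm |∂₂ (∂₂ f) _|]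

theorem sq_le_two_mul_sqrt_mul_sqrt_vertical (f : 𝓢(ℝ × ℝ, ℝ)) (x y : ℝ) :
    f (x, y) ^ 2 ≤ 2 * √(∫ t, f (x, t) ^ 2) * √(∫ t, ∂₂ f (x, t) ^ 2) := by
  have h := sq_le_two_mul_integral_abs_mul_deriv (verticalSlice f x) y
  simp only [coe_verticalSlice, deriv_apply_prodMk_right] at h
  refine h.trans ?_
  rw [mul_assoc]
  gcongr
  exact integral_abs_mul_le_sqrt_mul_sqrt ((verticalSlice f x).memLp 2 volume)
    ((verticalSlice (∂₂ f) x).memLp 2 volume)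

end SchwartzMap

open SchwartzMap

/-- anisotropic Gagliardo–Nirenberg inequality: for Schwartz
`f : ℝ² → ℝ`, `‖f‖_∞ ≲ ‖f‖₂^{1/4} ‖∂ₓf‖₂^{1/2} ‖∂_y²f‖₂^{1/4}` with an absolute
constant (here L² norms are written as `(∫ |·|²)^{1/2}`). -/
theorem anisotropic_gagliardo_nirenberg :
    ∃ C : ℝ, 0 < C ∧ ∀ f : SchwartzMap (ℝ × ℝ) ℝ, ∀ p : ℝ × ℝ,
      |f p| ≤ C * (∫ q : ℝ × ℝ, (f q) ^ 2) ^ ((1:ℝ) / 8)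
        * (∫ q : ℝ × ℝ, (deriv (fun s => f (s, q.2)) q.1) ^ 2) ^ ((1:ℝ) / 4)
        * (∫ q : ℝ × ℝ,
            (deriv (fun s => deriv (fun r => f (q.1, r)) s) q.2) ^ 2) ^ ((1:ℝ) / 8) := by
  refine ⟨2, two_pos, fun f ⟨x, y⟩ => ?_⟩
  simp only [deriv_apply_prodMk_left, deriv_apply_prodMk_right]
  have hCS : ∀ g h : 𝓢(ℝ × ℝ, ℝ),
      ∫ z, |g z * h z| ≤ √(∫ z, g z ^ 2) * √(∫ z, h z ^ 2) := fun g h =>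
    integral_abs_mul_le_sqrt_mul_sqrt (g.memLp 2) (h.memLp 2)
  refine abs_le_of_sq_le_two_mul_sqrt_mul_sqrt (integral_nonneg fun _ => sq_nonneg _)
    (integral_nonneg fun _ => sq_nonneg _) (integral_nonneg fun _ => sq_nonneg _)
    (sq_le_two_mul_sqrt_mul_sqrt_vertical f x y) ?_ ?_
  · exact (integral_sq_vertical_le f x).trans (by gcongr; exact hCS f (∂₁ f))
  · exact (integral_sq_deriv_vertical_le f x).trans (by gcongr; exact hCS (∂₁ f) (∂₂ (∂₂ f)))
end
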